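/- arXiv:2006.03746 — 3 statements merged into one kernel-verified Lean document; each statement's English description precedes it below -/
import Mathlib

section
/- Let n be a set of pairwise disjoint sets S₁, …, S_k of vertices such that each G^2[S_i] is a clique, and suppose each |S_i| ≥ l + 1 for a positive integer l. Let S = S₁ ∪ … ∪ S_k and let O be any vertex cover of G^2[S]. Then |S| ≤ (1 + 1/l)·|O|. -/
open SimpleGraph

variable {V : Type*}

/-- The `r`-th power of a graph: distinct vertices are adjacent iff their
distance in `G` is at most `r` (i.e. there is a walk of length at most `r`). -/
def graphPow (G : SimpleGraph V) (r : ℕ) : SimpleGraph V where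
  Adj u v := u ≠ v ∧ ∃ p : G.Walk u v, p.length ≤ r
  symm := by
    constructor
    rintro u v ⟨h, p, hp⟩
    exact ⟨h.symm, p.reverse, by simpa using hp⟩
  loopless := by constructor; rintro u ⟨h, _⟩; exact h rfl

/-- `C` is a vertex cover of `H`. -/
def isVC (H : SimpleGraph V) (C : Finset V) : Prop :=
  ∀ ⦃u v : V⦄, H.Adj u v → u ∈ C ∨ v ∈ C

/-- `C` covers all edges of `H` with both endpoints in `W` (vertex cover of the
induced subgraph `H[W]`). -/
def isVCOn (H : SimpleGraph V) (W : Finset V) (C : Finset V) : Prop :=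
  ∀ ⦃u v : V⦄, u ∈ W → v ∈ W → H.Adj u v → u ∈ C ∨ v ∈ C


open Finset

section VertexCover

variable [DecidableEq V] {H : SimpleGraph V} {W C S : Finset V}

lemma card_sdiff_le_one_of_isClique (hC : isVCOn H W C) (hSW : S ⊆ W)
    (hS : H.IsClique (S : Set V)) : #(S \ C) ≤ 1 := by
  refine card_le_one.2 fun x hx y hy => by_contra fun hxy => ?_
  rw [mem_sdiff] at hx hy
  rcases hC (hSW hx.1) (hSW hy.1) (hS hx.1 hy.1 hxy) with hxC | hyC
  exacts [hx.2 hxC, hy.2 hyC]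

/-- A cover misses at most one vertex of a clique of size `≥ l + 1`, so it keeps at least
`l` of them, and the missed vertex is paid for by `1 / l` of the kept ones. -/
lemma card_le_one_add_inv_mul_card_inter_of_isClique {l : ℕ} (hl : 1 ≤ l)
    (hC : isVCOn H W C) (hSW : S ⊆ W) (hS : H.IsClique (S : Set V)) (hsize : l + 1 ≤ #S) :
    (#S : ℝ) ≤ (1 + 1 / (l : ℝ)) * #(S ∩ C) := by
  have hsplit := card_inter_add_card_sdiff S C
  have hmiss := card_sdiff_le_one_of_isClique hC hSW hS
  have hS_le : (#S : ℝ) ≤ #(S ∩ C) + 1 := by exact_mod_cast (by omega : #S ≤ #(S ∩ C) + 1)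
  have hl_le : (l : ℝ) ≤ #(S ∩ C) := by exact_mod_cast (by omega : l ≤ #(S ∩ C))
  have hl_pos : (0 : ℝ) < l := by exact_mod_cast hl
  calc (#S : ℝ) ≤ #(S ∩ C) + 1 := hS_le
    _ ≤ #(S ∩ C) + #(S ∩ C) / l := by gcongr; exact (one_le_div hl_pos).2 hl_le
    _ = (1 + 1 / (l : ℝ)) * #(S ∩ C) := by ring

end VertexCover

lemma Finset.sum_card_inter_le_card {ι : Type*} [DecidableEq V] {s : Finset ι}
    {t : ι → Finset V} (ht : (s : Set ι).PairwiseDisjoint t) (C : Finset V) :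
    ∑ i ∈ s, #(t i ∩ C) ≤ #C := by
  rw [← card_biUnion (ht.mono_on fun i _ => inter_subset_left)]
  exact card_le_card (biUnion_subset.2 fun i _ => inter_subset_right)

theorem stmt4 [DecidableEq V] (G : SimpleGraph V) (k l : ℕ) (hl : 1 ≤ l)
    (Sets : Fin k → Finset V)
    (hdisj : ∀ i j, i ≠ j → Disjoint (Sets i) (Sets j))
    (hclique : ∀ i, ∀ x ∈ Sets i, ∀ y ∈ Sets i, x ≠ y → (graphPow G 2).Adj x y)
    (hsize : ∀ i, l + 1 ≤ (Sets i).card)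
    (O : Finset V)
    (hO : isVCOn (graphPow G 2) (Finset.univ.biUnion Sets) O) :
    ((Finset.univ.biUnion Sets).card : ℝ) ≤ (1 + 1 / (l : ℝ)) * O.card := by
  have hpairwise : ((univ : Finset (Fin k)) : Set (Fin k)).PairwiseDisjoint Sets :=
    fun i _ j _ hij => hdisj i j hij
  have hblock (i : Fin k) : (#(Sets i) : ℝ) ≤ (1 + 1 / (l : ℝ)) * #(Sets i ∩ O) :=
    card_le_one_add_inv_mul_card_inter_of_isClique hl hO (subset_biUnion_of_mem Sets (mem_univ i))
      (fun x hx y hy hxy => hclique i x hx y hy hxy) (hsize i)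
  calc (#(univ.biUnion Sets) : ℝ) = ∑ i, (#(Sets i) : ℝ) := by
        rw [card_biUnion hpairwise]; push_cast; rfl
    _ ≤ ∑ i, (1 + 1 / (l : ℝ)) * #(Sets i ∩ O) := sum_le_sum fun i _ => hblock i
    _ = (1 + 1 / (l : ℝ)) * ∑ i, (#(Sets i ∩ O) : ℝ) := (mul_sum ..).symm
    _ ≤ (1 + 1 / (l : ℝ)) * #O := by
        gcongr
        exact_mod_cast sum_card_inter_le_card hpairwise O
end

section
/- Let G be a graph and partition V(G) into S and U = V(G) \ S. Suppose R* is a minimum vertex cover of G^2[U] and suppose S satisfies |S| ≤ (1+ε)·|O| for every vertex cover O of G^2[S]. Then |S ∪ R*| ≤ (1+ε)·|OPT| where OPT is any minimum vertex cover of G^2, provided S ∪ R* is a vertex cover of G^2. -/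
open SimpleGraph

variable {V : Type*}

lemma isVCOn_inter_of_isVC [DecidableEq V] {H : SimpleGraph V} {C : Finset V} (hC : isVC H C)
    (W : Finset V) : isVCOn H W (C ∩ W) := fun _ _ hu hv huv =>
  (hC huv).imp (fun h => Finset.mem_inter.2 ⟨h, hu⟩) (fun h => Finset.mem_inter.2 ⟨h, hv⟩)

lemma Finset.card_inter_add_card_inter_compl {α : Type*} [Fintype α] [DecidableEq α]
    (s t : Finset α) :
    (s ∩ t).card + (s ∩ tᶜ).card = s.card := by
  rw [← Finset.sdiff_eq_inter_compl]
  exact Finset.card_inter_add_card_sdiff s t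

theorem stmt6_general [Fintype V] [DecidableEq V] (G : SimpleGraph V) (ε : ℝ) (hε : 0 ≤ ε)
    (S R OPT : Finset V)
    (hRmin : ∀ C : Finset V, C ⊆ Sᶜ → isVCOn (graphPow G 2) Sᶜ C → R.card ≤ C.card)
    (hS : ∀ O : Finset V, isVCOn (graphPow G 2) S O → (S.card : ℝ) ≤ (1 + ε) * O.card)
    (hOPTvc : isVC (graphPow G 2) OPT) :
    ((S ∪ R).card : ℝ) ≤ (1 + ε) * OPT.card := by
  have hS_OPT := hS _ (isVCOn_inter_of_isVC hOPTvc S)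
  have hR_OPT : R.card ≤ (OPT ∩ Sᶜ).card :=
    hRmin _ Finset.inter_subset_right (isVCOn_inter_of_isVC hOPTvc Sᶜ)
  have hsplit := Finset.card_inter_add_card_inter_compl OPT S
  calc ((S ∪ R).card : ℝ) ≤ S.card + R.card := mod_cast Finset.card_union_le S R
    _ ≤ (1 + ε) * (OPT ∩ S).card + (OPT ∩ Sᶜ).card := by gcongr
    _ ≤ (1 + ε) * ((OPT ∩ S).card + (OPT ∩ Sᶜ).card) := by
      nlinarith [(OPT ∩ Sᶜ).card.cast_nonneg (α := ℝ)]
    _ = (1 + ε) * OPT.card := by rw [← hsplit, Nat.cast_add]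

theorem stmt6 [Fintype V] [DecidableEq V] (G : SimpleGraph V) (ε : ℝ) (hε : 0 ≤ ε)
    (S R OPT : Finset V)
    (hRsub : R ⊆ Sᶜ)
    (hRvc : isVCOn (graphPow G 2) Sᶜ R)
    (hRmin : ∀ C : Finset V, C ⊆ Sᶜ → isVCOn (graphPow G 2) Sᶜ C → R.card ≤ C.card)
    (hS : ∀ O : Finset V, isVCOn (graphPow G 2) S O → (S.card : ℝ) ≤ (1 + ε) * O.card)
    (hOPTvc : isVC (graphPow G 2) OPT)
    (hOPTmin : ∀ C : Finset V, isVC (graphPow G 2) C → OPT.card ≤ C.card)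
    (hcov : isVC (graphPow G 2) (S ∪ R)) :
    ((S ∪ R).card : ℝ) ≤ (1 + ε) * OPT.card :=
  stmt6_general G ε hε S R OPT hRmin hS hOPTvc
end

section
/- Let G be a graph and let H be obtained from G by, for each edge e = {u,v} of G, deleting e and adding three new vertices p_e¹, p_e², p_e³ forming a path p_e¹ − p_e² − p_e³, with p_e¹ additionally adjacent to both u and v (a dangling path gadget; new vertices of different gadgets are distinct). Then G has a vertex cover of size at most W if and only if H² has a vertex cover of size at most W + 2·|E(G)|. -/
/-! In `H²` the three vertices of every gadget form a triangle, the tip `(e, 2)` has no other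
neighbours, and two original vertices are adjacent exactly when they are adjacent in `G` (through
`(e, 0)`). So a vertex cover of `G` together with the vertices `(e, 0), (e, 1)` of every gadget
covers `H²`; conversely a vertex cover of `H²` contains at least two vertices of every triangle,
and its original vertices cover `G`. -/

open SimpleGraph

variable {V : Type*}

/-- The graph `H` obtained from `G` by replacing every edge `e = {u,v}` with a
dangling path gadget: three fresh vertices `(e,0) - (e,1) - (e,2)` forming a
path, with `(e,0)` additionally adjacent to both endpoints of `e`; the original
edge is deleted. -/
def gadgetGraph (G : SimpleGraph V) : SimpleGraph (V ⊕ (G.edgeSet × Fin 3)) where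
  Adj x y :=
    match x, y with
    | Sum.inl _, Sum.inl _ => False
    | Sum.inl u, Sum.inr (e, i) => i = 0 ∧ u ∈ (e : Sym2 V)
    | Sum.inr (e, i), Sum.inl u => i = 0 ∧ u ∈ (e : Sym2 V)
    | Sum.inr (e, i), Sum.inr (f, j) => e = f ∧ (i.val + 1 = j.val ∨ j.val + 1 = i.val)
  symm := by
    constructor
    rintro (u | ⟨e, i⟩) (v | ⟨f, j⟩) h <;> simp_all <;> tauto
  loopless := by
    constructor
    rintro (u | ⟨e, i⟩) h <;> simp_all

open Finset

lemma graphPow_two_adj_iff (H : SimpleGraph V) {u v : V} :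
    (graphPow H 2).Adj u v ↔ u ≠ v ∧ (H.Adj u v ∨ ∃ w, H.Adj u w ∧ H.Adj w v) := by
  refine ⟨?_, ?_⟩
  · rintro ⟨hne, p, hp⟩
    refine ⟨hne, ?_⟩
    match p, hp with
    | .nil, _ => exact absurd rfl hne
    | .cons h .nil, _ => exact .inl h
    | .cons h (.cons h' .nil), _ => exact .inr ⟨_, h, h'⟩
    | .cons _ (.cons _ (.cons _ _)), hp => simp at hp
  · rintro ⟨hne, h | ⟨w, h₁, h₂⟩⟩
    · exact ⟨hne, h.toWalk, by simp⟩
    · exact ⟨hne, .cons h₁ h₂.toWalk, by simp⟩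

lemma isVC.card_le_card_filter_mem_add_one [DecidableEq V] {H : SimpleGraph V} {C : Finset V}
    (hC : isVC H C) {ι : Type*} [Fintype ι] {f : ι → V} (hf : Pairwise fun i j => H.Adj (f i) (f j)) :
    Fintype.card ι ≤ #{i | f i ∈ C} + 1 := by
  have hout : #{i | f i ∉ C} ≤ 1 := card_le_one.mpr fun i hi j hj => by_contra fun hij =>
    (hC (hf hij)).elim (mem_filter.mp hi).2 (mem_filter.mp hj).2
  have := card_filter_add_card_filter_not (s := univ) fun i => f i ∈ C
  rw [card_univ] at this
  omega

section gadgetGraph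

variable {G : SimpleGraph V} {u v : V} {e f : G.edgeSet} {i j : Fin 3}

@[simp] lemma gadgetGraph_adj_inl_inl : ¬ (gadgetGraph G).Adj (.inl u) (.inl v) := id

@[simp] lemma gadgetGraph_adj_inl_inr :
    (gadgetGraph G).Adj (.inl u) (.inr (e, i)) ↔ i = 0 ∧ u ∈ (e : Sym2 V) := .rfl

@[simp] lemma gadgetGraph_adj_inr_inl :
    (gadgetGraph G).Adj (.inr (e, i)) (.inl u) ↔ i = 0 ∧ u ∈ (e : Sym2 V) := .rfl

@[simp] lemma gadgetGraph_adj_inr_inr :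
    (gadgetGraph G).Adj (.inr (e, i)) (.inr (f, j)) ↔
      e = f ∧ (i.val + 1 = j.val ∨ j.val + 1 = i.val) := .rfl

lemma graphPow_two_gadgetGraph_adj_inl_inl :
    (graphPow (gadgetGraph G) 2).Adj (.inl u) (.inl v) ↔ G.Adj u v := by
  rw [graphPow_two_adj_iff]
  refine ⟨?_, fun h => ⟨by simpa using h.ne, .inr ⟨.inr (⟨s(u, v), h⟩, 0), by simp, by simp⟩⟩⟩
  rintro ⟨hne, h | ⟨_ | ⟨e, k⟩, h₁, h₂⟩⟩
  · exact absurd h gadgetGraph_adj_inl_inl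
  · exact absurd h₁ gadgetGraph_adj_inl_inl
  · rw [gadgetGraph_adj_inl_inr] at h₁
    rw [gadgetGraph_adj_inr_inl] at h₂
    have huv : u ≠ v := fun h => hne (h ▸ rfl)
    have he : (e : Sym2 V) = s(u, v) := (Sym2.mem_and_mem_iff huv).mp ⟨h₁.2, h₂.2⟩
    simpa [he] using e.2

lemma eq_inr_of_graphPow_two_gadgetGraph_adj_inr_two {x : V ⊕ (G.edgeSet × Fin 3)}
    (h : (graphPow (gadgetGraph G) 2).Adj x (.inr (e, 2))) : ∃ j ≠ 2, x = .inr (e, j) := by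
  rw [graphPow_two_adj_iff] at h
  obtain ⟨hne, h | ⟨w, h₁, h₂⟩⟩ := h
  · rcases x with u | ⟨f, k⟩
    · simp at h
    · obtain ⟨rfl, -⟩ := gadgetGraph_adj_inr_inr.mp h
      exact ⟨k, by rintro rfl; exact hne rfl, rfl⟩
  · rcases w with w | ⟨g, l⟩
    · simp at h₂
    rcases x with u | ⟨f, k⟩
    · obtain ⟨rfl, -⟩ := gadgetGraph_adj_inl_inr.mp h₁
      simp at h₂
    · obtain ⟨rfl, -⟩ := gadgetGraph_adj_inr_inr.mp h₁
      obtain ⟨rfl, -⟩ := gadgetGraph_adj_inr_inr.mp h₂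
      exact ⟨k, by rintro rfl; exact hne rfl, rfl⟩

lemma graphPow_two_gadgetGraph_adj_inr_inr (hij : i ≠ j) :
    (graphPow (gadgetGraph G) 2).Adj (.inr (e, i)) (.inr (e, j)) := by
  rw [graphPow_two_adj_iff]
  refine ⟨by simpa using hij, ?_⟩
  by_cases h : i.val + 1 = j.val ∨ j.val + 1 = i.val
  · exact .inl (by simpa using h)
  · refine .inr ⟨.inr (e, 1), ?_, ?_⟩ <;> simp <;> omega

lemma isVC_graphPow_two_gadgetGraph_disjSum [Fintype G.edgeSet] {C : Finset V} (hC : isVC G C) :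
    isVC (graphPow (gadgetGraph G) 2) (C.disjSum (univ ×ˢ {2}ᶜ)) := by
  have hcovered : ∀ x e i, (graphPow (gadgetGraph G) 2).Adj x (.inr (e, i)) →
      x ∈ C.disjSum (univ ×ˢ {2}ᶜ) ∨ .inr (e, i) ∈ C.disjSum (univ ×ˢ {2}ᶜ) := by
    intro x e i h
    by_cases hi : i = 2
    · subst hi
      obtain ⟨j, hj, rfl⟩ := eq_inr_of_graphPow_two_gadgetGraph_adj_inr_two h
      exact .inl (by simpa using hj)
    · exact .inr (by simpa using hi)
  rintro x (v | ⟨f, j⟩) h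
  · rcases x with u | ⟨e, i⟩
    · simpa using hC (graphPow_two_gadgetGraph_adj_inl_inl.mp h)
    · exact (hcovered _ _ _ h.symm).symm
  · exact hcovered _ _ _ h

lemma isVC_toLeft_of_isVC_graphPow_two_gadgetGraph {C : Finset (V ⊕ (G.edgeSet × Fin 3))}
    (hC : isVC (graphPow (gadgetGraph G) 2) C) : isVC G C.toLeft :=
  fun _ _ h => by simpa using hC (graphPow_two_gadgetGraph_adj_inl_inl.mpr h)

lemma two_mul_card_edgeSet_le_card_toRight [DecidableEq V] [Fintype G.edgeSet]
    {C : Finset (V ⊕ (G.edgeSet × Fin 3))} (hC : isVC (graphPow (gadgetGraph G) 2) C) :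
    2 * Fintype.card G.edgeSet ≤ #C.toRight := by
  have hgadget (e : G.edgeSet) : 2 ≤ #{i | Sum.inr (e, i) ∈ C} := by
    simpa using hC.card_le_card_filter_mem_add_one (f := fun i => .inr (e, i))
      fun _ _ hij => graphPow_two_gadgetGraph_adj_inr_inr hij
  calc 2 * Fintype.card G.edgeSet = ∑ _e : G.edgeSet, 2 := by simp [mul_comm]
    _ ≤ ∑ e, #{i | Sum.inr (e, i) ∈ C} := sum_le_sum fun e _ => hgadget e
    _ = #C.toRight := by
      rw [show C.toRight = ({p | Sum.inr p ∈ C} : Finset _) by ext; simp, card_filter,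
        ← univ_product_univ, sum_product]
      simp only [card_filter]

end gadgetGraph

theorem stmt14 [Fintype V] [DecidableEq V] (G : SimpleGraph V) [DecidableRel G.Adj]
    (W : ℕ) :
    (∃ C : Finset V, isVC G C ∧ C.card ≤ W) ↔
    (∃ C : Finset (V ⊕ (G.edgeSet × Fin 3)),
      isVC (graphPow (gadgetGraph G) 2) C ∧ C.card ≤ W + 2 * G.edgeFinset.card) := by
  rw [edgeFinset_card]
  constructor
  · rintro ⟨C, hC, hCW⟩
    refine ⟨_, isVC_graphPow_two_gadgetGraph_disjSum hC, ?_⟩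
    rw [card_disjSum, card_product, card_univ, card_compl, card_singleton, Fintype.card_fin]
    omega
  · rintro ⟨C, hC, hCW⟩
    refine ⟨C.toLeft, isVC_toLeft_of_isVC_graphPow_two_gadgetGraph hC, ?_⟩
    have hsplit := card_toLeft_add_card_toRight (u := C)
    have hgadgets := two_mul_card_edgeSet_le_card_toRight hC
    omega
end
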